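/- Isolatedness of lifted critical points: let ũ = (u_F, 0, …, 0) ∈ ℂ^n with u_F ∈ ℂ^k, (u_F)₊ ≠ 0. Suppose θ̂_F = (θ̂₀,…,θ̂_{d−1}) ∈ ℂ^d is a common zero of the facial likelihood system L_{A_F}(·; u_F) such that (a) the Jacobian matrix of the d polynomials of L_{A_F} with respect to (θ₀,…,θ_{d−1}) is invertible at θ̂_F, (b) θ̂₀ ≠ 0, and (c) (∂(θ_d g)/∂θ_d)(θ̂₁,…,θ̂_{d−1}, 0) ≠ 0 (equivalently, g(θ̂₁,…,θ̂_{d−1},0) ≠ 0). Then θ̂ = (θ̂_F, 0) is an isolated point of the common zero set of L_A(θ; ũ) in ℂ^{d+1} (with respect to the Euclidean topology). -/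

import Mathlib

noncomputable section

open scoped BigOperators

/-- Given `φ = (θ₀, θ₁, …, θ_{d-1}) : Fin d → ℂ`, the vector
`(θ₁, …, θ_{d-1}, 0) : Fin d → ℂ` of torus variables with last coordinate `θ_d = 0`
(slot `j : Fin d` corresponds to the variable `θ_{j+1}`). -/
def thetaVec {d : ℕ} (φ : Fin d → ℂ) : Fin d → ℂ :=
  fun j => if h : (j : ℕ) + 1 < d then φ ⟨(j : ℕ) + 1, h⟩ else 0

/-- The extension of facial data `u_F ∈ ℂ^k` by `n - k` data zeros:
`ũ = (u_F, 0, …, 0) ∈ ℂ^n`. -/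
def utilde {k n : ℕ} (uF : Fin k → ℂ) : Fin n → ℂ :=
  fun i => if h : (i : ℕ) < k then uF ⟨(i : ℕ), h⟩ else 0

/-- The zero set of the likelihood system `L_A(θ; u)` in the variables
`θ = (θ₀, θ₁, …, θ_d) : Fin (d+1) → ℂ`, for the design matrix `A` with columns
`(1, a_i)` and `f = Σ_i c_i θ^{a_i}`: the equations are `θ₀ f - 1 = 0` and, for each
slot `r : Fin d` (corresponding to the variable `θ_{r+1}`),
`θ₀ θ_{r+1} ∂f/∂θ_{r+1} - u₊⁻¹ (A u)_{r+2} = 0`,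
where `θ_{r+1} ∂f/∂θ_{r+1} = Σ_m c_m a_{m,r} θ^{a_m}`. -/
def ZA {d n : ℕ} (a : Fin n → Fin d → ℕ) (c : Fin n → ℂ) (u : Fin n → ℂ) :
    Set (Fin (d + 1) → ℂ) :=
  {θ | θ 0 * (∑ m, c m * ∏ j, θ j.succ ^ a m j) - 1 = 0 ∧
    ∀ r : Fin d,
      θ 0 * (∑ m, c m * (a m r : ℂ) * ∏ j, θ j.succ ^ a m j)
        - (∑ m, u m)⁻¹ * (∑ m, (a m r : ℂ) * u m) = 0}

/-- The zero set of the facial likelihood system `L_{A_F}((θ₀, …, θ_{d-1}); u_F)` in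
the variables `φ = (θ₀, …, θ_{d-1}) : Fin d → ℂ`, for the facial design matrix `A_F`
consisting of the first `k` columns of `A` (with the last row removed) and
`f_F = Σ_{m<k} c_m θ^{a_m}` (which does not involve `θ_d`): the equations are
`θ₀ f_F - 1 = 0` and, for each slot `r : Fin d` with `r + 1 < d` (variable `θ_{r+1}`),
`θ₀ θ_{r+1} ∂f_F/∂θ_{r+1} - (u_F)₊⁻¹ (A_F u_F)_{r+2} = 0`. -/
def ZF {d k n : ℕ} (hd : 0 < d) (hkn : k ≤ n) (a : Fin n → Fin d → ℕ) (c : Fin n → ℂ)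
    (uF : Fin k → ℂ) : Set (Fin d → ℂ) :=
  {φ | φ ⟨0, hd⟩ * (∑ m : Fin k, c (Fin.castLE hkn m) *
        ∏ j, thetaVec φ j ^ a (Fin.castLE hkn m) j) - 1 = 0 ∧
    ∀ r : Fin d, (r : ℕ) + 1 < d →
      φ ⟨0, hd⟩ * (∑ m : Fin k, c (Fin.castLE hkn m) * (a (Fin.castLE hkn m) r : ℂ) *
          ∏ j, thetaVec φ j ^ a (Fin.castLE hkn m) j)
        - (∑ m, uF m)⁻¹ * (∑ m : Fin k, (a (Fin.castLE hkn m) r : ℂ) * uF m) = 0}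

/-- The polynomial `g = θ_d^{-α} ∂f/∂θ_d`, as a function on `ℂ^d` (torus variables
`θ₁, …, θ_d`, slot `j : Fin d` for `θ_{j+1}`):
`g = Σ_{m ≥ k} c_m a_{m,d} θ_d^{a_{m,d} - 1 - α} ∏_{j<d-1} θ_{j+1}^{a_{m,j}}`. -/
def gfun {d n : ℕ} (hd : 0 < d) (k α : ℕ) (a : Fin n → Fin d → ℕ) (c : Fin n → ℂ)
    (θ : Fin d → ℂ) : ℂ :=
  ∑ m ∈ Finset.univ.filter (fun m : Fin n => k ≤ (m : ℕ)),
    c m * (a m ⟨d - 1, Nat.sub_lt hd Nat.one_pos⟩ : ℂ) *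
      ∏ j, θ j ^ (if (j : ℕ) = d - 1 then a m j - (α + 1) else a m j)

/-- The common zeros of the first `d` polynomials of `L_A(θ; u)`: the equation
`θ₀ f - 1 = 0` together with the equations for the variables `θ₁, …, θ_{d-1}`
(slots `r : Fin d` with `r + 1 < d`). -/
def partialZA {d n : ℕ} (a : Fin n → Fin d → ℕ) (c : Fin n → ℂ) (u : Fin n → ℂ) :
    Set (Fin (d + 1) → ℂ) :=
  {θ | θ 0 * (∑ m, c m * ∏ j, θ j.succ ^ a m j) - 1 = 0 ∧
    ∀ r : Fin d, (r : ℕ) + 1 < d →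
      θ 0 * (∑ m, c m * (a m r : ℂ) * ∏ j, θ j.succ ^ a m j)
        - (∑ m, u m)⁻¹ * (∑ m, (a m r : ℂ) * u m) = 0}

/-- The zero set of the system `L₁(θ; u)`, obtained from `L_A(θ; u)` by replacing the
last polynomial by `θ_d^{α+1}`. -/
def Z1 {d n : ℕ} (α : ℕ) (a : Fin n → Fin d → ℕ) (c : Fin n → ℂ) (u : Fin n → ℂ) :
    Set (Fin (d + 1) → ℂ) :=
  {θ | θ ∈ partialZA a c u ∧ θ (Fin.last d) ^ (α + 1) = 0}

/-- The zero set of the system `L₂(θ; u)`, obtained from `L_A(θ; u)` by replacing the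
last polynomial by `θ₀ θ_d g`. -/
def Z2 {d n : ℕ} (hd : 0 < d) (k α : ℕ) (a : Fin n → Fin d → ℕ) (c : Fin n → ℂ)
    (u : Fin n → ℂ) : Set (Fin (d + 1) → ℂ) :=
  {θ | θ ∈ partialZA a c u ∧
    θ 0 * θ (Fin.last d) * gfun hd k α a c (fun j => θ j.succ) = 0}

/-- The facial likelihood system `L_{A_F}(·; u_F)` as a square map `ℂ^d → ℂ^d`:
component `0` is `θ₀ f_F - 1`, and component `r` with `1 ≤ r ≤ d-1` is
`θ₀ θ_r ∂f_F/∂θ_r - (u_F)₊⁻¹ (A_F u_F)_{r+1}` (variable `θ_r` has exponent slot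
`r - 1`). A point is a common zero of this map iff it lies in `ZF`. -/
def LFmap {d k n : ℕ} (hd : 2 ≤ d) (hkn : k ≤ n) (a : Fin n → Fin d → ℕ)
    (c : Fin n → ℂ) (uF : Fin k → ℂ) : (Fin d → ℂ) → Fin d → ℂ :=
  fun φ r =>
    if (r : ℕ) = 0 then
      φ ⟨0, by omega⟩ * (∑ m : Fin k, c (Fin.castLE hkn m) *
        ∏ j, thetaVec φ j ^ a (Fin.castLE hkn m) j) - 1
    else
      φ ⟨0, by omega⟩ * (∑ m : Fin k, c (Fin.castLE hkn m) *
          (a (Fin.castLE hkn m) ⟨(r : ℕ) - 1, by have := r.isLt; omega⟩ : ℂ) *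
          ∏ j, thetaVec φ j ^ a (Fin.castLE hkn m) j)
        - (∑ m, uF m)⁻¹ *
            (∑ m : Fin k, (a (Fin.castLE hkn m) ⟨(r : ℕ) - 1, by have := r.isLt; omega⟩ : ℂ) * uF m)

lemma sum_truncate' {n k : ℕ} (hkn : k ≤ n) (h : Fin n → ℂ)
    (h0 : ∀ m : Fin n, k ≤ (m:ℕ) → h m = 0) :
    ∑ m, h m = ∑ m : Fin k, h (Fin.castLE hkn m) := by
  classical
  have key : ∑ m ∈ (Finset.univ.map ⟨Fin.castLE hkn, Fin.castLE_injective hkn⟩), h m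
      = ∑ m : Fin n, h m := by
    refine Finset.sum_subset (Finset.subset_univ _) ?_
    intro x _ hx
    refine h0 x ?_
    by_contra h'
    push_neg at h'
    exact hx (Finset.mem_map.mpr ⟨⟨x, h'⟩, Finset.mem_univ _, rfl⟩)
  rw [← key, Finset.sum_map]
  rfl

lemma succ_eq_thetaVec' {d : ℕ} (θ : Fin (d+1) → ℂ) (h : θ (Fin.last d) = 0) (j : Fin d) :
    θ j.succ = thetaVec (fun i => θ i.castSucc) j := by
  unfold thetaVec
  split_ifs with hj
  · congr 1
  · have hle : j.succ = Fin.last d := by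
      ext; simp only [Fin.val_succ, Fin.val_last]; omega
    rw [hle, h]

lemma snoc_succ' {d : ℕ} (θF : Fin d → ℂ) (j : Fin d) :
    (Fin.snoc θF (0:ℂ) : Fin (d+1) → ℂ) j.succ = thetaVec θF j := by
  have h0 : (Fin.snoc θF (0:ℂ) : Fin (d+1) → ℂ) (Fin.last d) = 0 := Fin.snoc_last _ _
  rw [succ_eq_thetaVec' _ h0]
  congr 1
  funext i
  exact Fin.snoc_castSucc _ _ i

lemma utilde_castLE {n k : ℕ} (hkn : k ≤ n) (uF : Fin k → ℂ) (m : Fin k) :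
    utilde uF (Fin.castLE hkn m) = uF m := by
  simp [utilde]

lemma utilde_high {n k : ℕ} (uF : Fin k → ℂ) (m : Fin n) (hm : k ≤ (m:ℕ)) :
    utilde uF m = 0 := by
  simp only [utilde]
  rw [dif_neg (by omega)]

lemma prod_factor' {d : ℕ} (hd : 0 < d) (x : Fin d → ℂ) (e : Fin d → ℕ) (α : ℕ)
    (he : α + 1 ≤ e ⟨d-1, Nat.sub_lt hd Nat.one_pos⟩) :
    ∏ j, x j ^ e j
      = x ⟨d-1, Nat.sub_lt hd Nat.one_pos⟩ ^ (α+1) *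
        ∏ j, x j ^ (if (j:ℕ) = d - 1 then e j - (α+1) else e j) := by
  classical
  set D : Fin d := ⟨d-1, Nat.sub_lt hd Nat.one_pos⟩ with hD
  rw [← Finset.prod_erase_mul _ _ (Finset.mem_univ D),
      ← Finset.prod_erase_mul _ (fun j => x j ^ (if (j:ℕ) = d - 1 then e j - (α+1) else e j))
        (Finset.mem_univ D)]
  have h1 : ∀ j ∈ Finset.univ.erase D,
      x j ^ (if (j:ℕ) = d - 1 then e j - (α+1) else e j) = x j ^ e j := by
    intro j hj
    rw [if_neg]
    intro hc
    exact (Finset.ne_of_mem_erase hj) (Fin.ext hc)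
  rw [Finset.prod_congr rfl h1]
  have h2 : (if ((D:ℕ) = d - 1) then e D - (α+1) else e D) = e D - (α+1) := if_pos rfl
  rw [h2]
  have h3 : x D ^ e D = x D ^ (α+1) * x D ^ (e D - (α+1)) := by
    rw [← pow_add]; congr 1; omega
  rw [h3]; ring

set_option maxHeartbeats 1600000 in
/-- Isolatedness of lifted critical points: if `θ̂_F = (θ̂₀, …, θ̂_{d-1})` is a common
zero of the facial likelihood system `L_{A_F}(·; u_F)` such that (a) the Jacobian of
`L_{A_F}` is invertible at `θ̂_F`, (b) `θ̂₀ ≠ 0`, and (c) `g(θ̂₁, …, θ̂_{d-1}, 0) ≠ 0`,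
then `θ̂ = (θ̂_F, 0)` is an isolated point of the zero set of `L_A(θ; ũ)` in `ℂ^{d+1}`
with respect to the Euclidean topology, where `ũ = (u_F, 0, …, 0)`. -/
theorem lifted_point_isolated {d k n : ℕ} (hd : 2 ≤ d) (hk : 1 ≤ k) (hkn : k < n)
    (a : Fin n → Fin d → ℕ)
    (ha0 : ∀ i : Fin n, (i : ℕ) < k → a i ⟨d - 1, by omega⟩ = 0)
    (ha1 : ∀ i : Fin n, k ≤ (i : ℕ) → 1 ≤ a i ⟨d - 1, by omega⟩)
    (c : Fin n → ℂ) (hc : ∀ i, c i ≠ 0)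
    (α : ℕ)
    (hα1 : ∀ i : Fin n, k ≤ (i : ℕ) → α + 1 ≤ a i ⟨d - 1, by omega⟩)
    (hα2 : ∃ i : Fin n, k ≤ (i : ℕ) ∧ a i ⟨d - 1, by omega⟩ = α + 1)
    (uF : Fin k → ℂ) (huF : (∑ m, uF m) ≠ 0)
    (θF : Fin d → ℂ)
    (hsol : ∀ r : Fin d, LFmap hd (le_of_lt hkn) a c uF θF r = 0)
    (hJac : Function.Bijective ⇑(fderiv ℂ (LFmap hd (le_of_lt hkn) a c uF) θF))
    (hθ0 : θF ⟨0, by omega⟩ ≠ 0)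
    (hg : gfun (by omega) k α a c (thetaVec θF) ≠ 0) :
    Fin.snoc θF (0 : ℂ) ∈ ZA a c (utilde uF) ∧
      ∃ ε > (0 : ℝ), ∀ θ ∈ ZA a c (utilde uF),
        dist θ (Fin.snoc θF (0 : ℂ)) < ε → θ = Fin.snoc θF (0 : ℂ) := by
  
  classical
  have hd1 : 0 < d := by omega
  set D : Fin d := ⟨d - 1, Nat.sub_lt hd1 Nat.one_pos⟩ with hDdef
  have hDval : (D : ℕ) = d - 1 := rfl
  have hthetaD : ∀ x : Fin d → ℂ, thetaVec x D = 0 := by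
    intro x
    unfold thetaVec
    have hcond : ¬((D : ℕ) + 1 < d) := by rw [hDval]; omega
    rw [dif_neg hcond]
  have hprod0 : ∀ (x : Fin d → ℂ) (m : Fin n), k ≤ (m : ℕ) →
      ∏ j, thetaVec x j ^ a m j = 0 := by
    intro x m hm
    refine Finset.prod_eq_zero (Finset.mem_univ D) ?_
    rw [hthetaD x]
    exact zero_pow (Nat.one_le_iff_ne_zero.mp (ha1 m hm))
  have F5 : ∀ x : Fin d → ℂ,
      ∑ m : Fin n, c m * ∏ j, thetaVec x j ^ a m j
        = ∑ m : Fin k, c (Fin.castLE (le_of_lt hkn) m) *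
            ∏ j, thetaVec x j ^ a (Fin.castLE (le_of_lt hkn) m) j := by
    intro x
    exact sum_truncate' _ _ (fun m hm => by rw [hprod0 x m hm, mul_zero])
  have F6 : ∀ (x : Fin d → ℂ) (r : Fin d),
      ∑ m : Fin n, c m * (a m r : ℂ) * ∏ j, thetaVec x j ^ a m j
        = ∑ m : Fin k, c (Fin.castLE (le_of_lt hkn) m) *
            (a (Fin.castLE (le_of_lt hkn) m) r : ℂ) *
            ∏ j, thetaVec x j ^ a (Fin.castLE (le_of_lt hkn) m) j := by
    intro x r
    exact sum_truncate' _ _ (fun m hm => by rw [hprod0 x m hm, mul_zero])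
  have F2 : ∑ m : Fin n, utilde uF m = ∑ m : Fin k, uF m := by
    rw [sum_truncate' (le_of_lt hkn) _ (fun m hm => utilde_high uF m hm)]
    exact Finset.sum_congr rfl (fun m _ => utilde_castLE _ uF m)
  have F3 : ∀ r : Fin d, ∑ m : Fin n, (a m r : ℂ) * utilde uF m
      = ∑ m : Fin k, (a (Fin.castLE (le_of_lt hkn) m) r : ℂ) * uF m := by
    intro r
    rw [sum_truncate' (le_of_lt hkn) _ (fun m hm => by rw [utilde_high uF m hm, mul_zero])]
    exact Finset.sum_congr rfl (fun m _ => by rw [utilde_castLE])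
  have F4 : ∑ m : Fin n, (a m D : ℂ) * utilde uF m = 0 := by
    refine Finset.sum_eq_zero (fun m _ => ?_)
    by_cases hm : k ≤ (m : ℕ)
    · rw [utilde_high uF m hm, mul_zero]
    · have hz : a m D = 0 := ha0 m (by omega)
      rw [hz]
      simp
  have hS : ∀ x : Fin d → ℂ,
      ∑ m : Fin n, c m * (a m D : ℂ) * ∏ j, x j ^ a m j
        = x D ^ (α + 1) * gfun hd1 k α a c x := by
    intro x
    have h1 : ∑ m : Fin n, c m * (a m D : ℂ) * ∏ j, x j ^ a m j
        = ∑ m ∈ Finset.univ.filter (fun m : Fin n => k ≤ (m : ℕ)),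
            c m * (a m D : ℂ) * ∏ j, x j ^ a m j := by
      symm
      refine Finset.sum_filter_of_ne ?_
      intro m _ hm
      by_contra hk'
      push_neg at hk'
      have hz : a m D = 0 := ha0 m hk'
      rw [hz] at hm
      simp at hm
    rw [h1, gfun, Finset.mul_sum]
    refine Finset.sum_congr rfl (fun m hm => ?_)
    have hk' : k ≤ (m : ℕ) := (Finset.mem_filter.mp hm).2
    rw [prod_factor' hd1 x (a m) α (hα1 m hk')]
    ring
  have h0cast : ∀ θ : Fin (d+1) → ℂ, θ 0 = (fun i : Fin d => θ i.castSucc) ⟨0, hd1⟩ := by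
    intro θ
    congr 1
  have E1 : ∀ θ : Fin (d+1) → ℂ, θ (Fin.last d) = 0 →
      θ 0 * (∑ m, c m * ∏ j, θ j.succ ^ a m j) - 1
        = LFmap hd (le_of_lt hkn) a c uF (fun i => θ i.castSucc) ⟨0, hd1⟩ := by
    intro θ hlast
    have hsucc := succ_eq_thetaVec' θ hlast
    simp only [LFmap, if_pos rfl, if_true]
    simp only [hsucc]
    rw [F5 (fun i => θ i.castSucc), h0cast θ]
  have E2 : ∀ θ : Fin (d+1) → ℂ, θ (Fin.last d) = 0 → ∀ (r : Fin d) (hr : (r : ℕ) + 1 < d),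
      θ 0 * (∑ m, c m * (a m r : ℂ) * ∏ j, θ j.succ ^ a m j)
          - (∑ m : Fin n, utilde uF m)⁻¹ * (∑ m, (a m r : ℂ) * utilde uF m)
        = LFmap hd (le_of_lt hkn) a c uF (fun i => θ i.castSucc) ⟨(r : ℕ) + 1, hr⟩ := by
    intro θ hlast r hr
    have hsucc := succ_eq_thetaVec' θ hlast
    simp only [LFmap, if_neg (by simp : ¬(((⟨(r : ℕ) + 1, hr⟩ : Fin d) : ℕ) = 0)),
      Nat.add_sub_cancel, Fin.eta]
    simp only [hsucc]
    rw [F6 (fun i => θ i.castSucc) r, F2, F3 r, h0cast θ]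
  have E3 : ∀ θ : Fin (d+1) → ℂ, θ (Fin.last d) = 0 →
      θ 0 * (∑ m, c m * (a m D : ℂ) * ∏ j, θ j.succ ^ a m j)
          - (∑ m : Fin n, utilde uF m)⁻¹ * (∑ m, (a m D : ℂ) * utilde uF m) = 0 := by
    intro θ hlast
    rw [F4, mul_zero, sub_zero]
    have h1 := hS (fun j => θ j.succ)
    rw [h1]
    have hDsucc : D.succ = Fin.last d := by
      ext
      simp only [Fin.val_succ, Fin.val_last, hDval]
      omega
    rw [hDsucc, hlast, zero_pow (by omega : α + 1 ≠ 0), zero_mul, mul_zero]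
  have key : ∀ θ : Fin (d+1) → ℂ, θ (Fin.last d) = 0 →
      ((∀ r : Fin d, LFmap hd (le_of_lt hkn) a c uF (fun i => θ i.castSucc) r = 0)
        ↔ θ ∈ ZA a c (utilde uF)) := by
    intro θ hlast
    constructor
    · intro h
      refine ⟨?_, ?_⟩
      · rw [E1 θ hlast]
        exact h _
      · intro r
        by_cases hr : (r : ℕ) + 1 < d
        · rw [E2 θ hlast r hr]
          exact h _
        · have hrD : r = D := by
            ext
            rw [hDval]
            have := r.isLt
            omega
          rw [hrD]
          exact E3 θ hlast
    · rintro ⟨h1, h2⟩ r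
      by_cases hr0 : (r : ℕ) = 0
      · have hre : r = ⟨0, hd1⟩ := by ext; exact hr0
        rw [hre, ← E1 θ hlast]
        exact h1
      · have hlt : ((⟨(r : ℕ) - 1, by omega⟩ : Fin d) : ℕ) + 1 < d := by
          simp only []
          have := r.isLt
          omega
        have hre : r = ⟨((⟨(r : ℕ) - 1, by omega⟩ : Fin d) : ℕ) + 1, hlt⟩ := by
          ext
          simp only []
          omega
        rw [hre, ← E2 θ hlast ⟨(r : ℕ) - 1, by omega⟩ hlt]
        exact h2 _
  have hmem : Fin.snoc θF (0 : ℂ) ∈ ZA a c (utilde uF) := by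
    refine (key _ (Fin.snoc_last _ _)).mp ?_
    have hφ : (fun i : Fin d => (Fin.snoc θF (0 : ℂ) : Fin (d+1) → ℂ) i.castSucc) = θF := by
      funext i
      exact Fin.snoc_castSucc _ _ i
    rw [hφ]
    exact hsol
  refine ⟨hmem, ?_⟩
  -- smoothness of LFmap
  have hth : ∀ j : Fin d, ContDiff ℂ ⊤ (fun φ : Fin d → ℂ => thetaVec φ j) := by
    intro j
    unfold thetaVec
    by_cases hj : (j : ℕ) + 1 < d
    · simp only [dif_pos hj]
      exact contDiff_apply ℂ ℂ _
    · simp only [dif_neg hj]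
      exact contDiff_const
  have hsmooth : ContDiff ℂ ⊤ (LFmap hd (le_of_lt hkn) a c uF) := by
    rw [contDiff_pi]
    intro r
    by_cases hr : (r : ℕ) = 0
    · simp only [LFmap, if_pos hr]
      refine ContDiff.sub ?_ contDiff_const
      refine ContDiff.mul (contDiff_apply ℂ ℂ _) ?_
      refine ContDiff.sum (fun m _ => ?_)
      refine ContDiff.mul contDiff_const ?_
      refine contDiff_prod (fun j _ => ?_)
      exact (hth j).pow _
    · simp only [LFmap, if_neg hr]
      refine ContDiff.sub ?_ contDiff_const
      refine ContDiff.mul (contDiff_apply ℂ ℂ _) ?_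
      refine ContDiff.sum (fun m _ => ?_)
      refine ContDiff.mul contDiff_const ?_
      refine contDiff_prod (fun j _ => ?_)
      exact (hth j).pow _
  set G : (Fin (d+1) → ℂ) → ℂ := fun θ => gfun hd1 k α a c (fun j => θ j.succ) with hGdef
  have hGcont : Continuous G := by
    rw [hGdef]
    unfold gfun
    refine continuous_finset_sum _ (fun m _ => ?_)
    refine Continuous.mul continuous_const ?_
    refine continuous_finset_prod _ (fun j _ => ?_)
    exact (continuous_apply _).pow _
  have hGhat : G (Fin.snoc θF (0 : ℂ)) ≠ 0 := by
    rw [hGdef]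
    have hl : (fun j : Fin d => (Fin.snoc θF (0 : ℂ) : Fin (d+1) → ℂ) j.succ) = thetaVec θF := by
      funext j
      exact snoc_succ' θF j
    show gfun hd1 k α a c (fun j => (Fin.snoc θF (0 : ℂ) : Fin (d+1) → ℂ) j.succ) ≠ 0
    rw [hl]
    exact hg
  have hev : ∀ᶠ θ' in nhds (Fin.snoc θF (0 : ℂ)), G θ' ≠ 0 :=
    hGcont.continuousAt.eventually_ne hGhat
  obtain ⟨ε₁, hε₁, hball₁⟩ := Metric.eventually_nhds_iff.mp hev
  have hstrict0 : HasStrictFDerivAt (LFmap hd (le_of_lt hkn) a c uF)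
      (fderiv ℂ (LFmap hd (le_of_lt hkn) a c uF) θF) θF :=
    hsmooth.contDiffAt.hasStrictFDerivAt (by simp)
  let Leq : (Fin d → ℂ) ≃ₗ[ℂ] (Fin d → ℂ) :=
    LinearEquiv.ofBijective
      ((fderiv ℂ (LFmap hd (le_of_lt hkn) a c uF) θF) : (Fin d → ℂ) →ₗ[ℂ] (Fin d → ℂ)) hJac
  let E' : (Fin d → ℂ) ≃L[ℂ] (Fin d → ℂ) := Leq.toContinuousLinearEquiv
  have hE : (E' : (Fin d → ℂ) →L[ℂ] (Fin d → ℂ))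
      = fderiv ℂ (LFmap hd (le_of_lt hkn) a c uF) θF := by
    ext x
    rfl
  have hstrict : HasStrictFDerivAt (LFmap hd (le_of_lt hkn) a c uF)
      ((E' : (Fin d → ℂ) ≃L[ℂ] (Fin d → ℂ)) : (Fin d → ℂ) →L[ℂ] (Fin d → ℂ)) θF := by
    rw [hE]
    exact hstrict0
  have hsrc : (hstrict.toOpenPartialHomeomorph (LFmap hd (le_of_lt hkn) a c uF)).source ∈ nhds θF :=
    (hstrict.toOpenPartialHomeomorph _).open_source.mem_nhds hstrict.mem_toOpenPartialHomeomorph_source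
  obtain ⟨δ, hδ, hballδ⟩ := Metric.mem_nhds_iff.mp hsrc
  refine ⟨min ε₁ δ, lt_min hε₁ hδ, ?_⟩
  intro θ hθZA hθdist
  have hG : gfun hd1 k α a c (fun j => θ j.succ) ≠ 0 := by
    have := hball₁ (lt_of_lt_of_le hθdist (min_le_left _ _))
    rw [hGdef] at this
    exact this
  have hθ0ne : θ 0 ≠ 0 := by
    have h2 : θ 0 * (∑ m, c m * ∏ j, θ j.succ ^ a m j) = 1 := sub_eq_zero.mp hθZA.1
    exact left_ne_zero_of_mul_eq_one h2
  have hlast0 : θ (Fin.last d) = 0 := by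
    have h2 := hθZA.2 D
    rw [F4, mul_zero, sub_zero] at h2
    have h3 := hS (fun j => θ j.succ)
    rw [h3] at h2
    have hDsucc : D.succ = Fin.last d := by
      ext
      simp only [Fin.val_succ, Fin.val_last, hDval]
      omega
    rw [hDsucc] at h2
    rcases mul_eq_zero.mp h2 with h | h
    · exact absurd h hθ0ne
    rcases mul_eq_zero.mp h with h' | h'
    · exact pow_eq_zero_iff (by omega : α + 1 ≠ 0) |>.mp h'
    · exact absurd h' hG
  have hLF : ∀ r : Fin d, LFmap hd (le_of_lt hkn) a c uF (fun i => θ i.castSucc) r = 0 :=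
    (key θ hlast0).mpr hθZA
  have hdistφ : dist (fun i : Fin d => θ i.castSucc) θF ≤ dist θ (Fin.snoc θF (0 : ℂ)) := by
    rw [dist_pi_le_iff dist_nonneg]
    intro i
    have hre : θF i = (Fin.snoc θF (0 : ℂ) : Fin (d+1) → ℂ) i.castSucc := by simp
    rw [hre]
    exact dist_le_pi_dist θ (Fin.snoc θF (0 : ℂ)) i.castSucc
  have hφmem : (fun i : Fin d => θ i.castSucc)
      ∈ (hstrict.toOpenPartialHomeomorph (LFmap hd (le_of_lt hkn) a c uF)).source := by
    apply hballδ
    rw [Metric.mem_ball]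
    exact lt_of_le_of_lt hdistφ (lt_of_lt_of_le hθdist (min_le_right _ _))
  have hθFmem : θF ∈ (hstrict.toOpenPartialHomeomorph (LFmap hd (le_of_lt hkn) a c uF)).source :=
    hballδ (Metric.mem_ball_self hδ)
  have hφeq : (fun i : Fin d => θ i.castSucc) = θF := by
    apply (hstrict.toOpenPartialHomeomorph (LFmap hd (le_of_lt hkn) a c uF)).injOn hφmem hθFmem
    have hcoe : ((hstrict.toOpenPartialHomeomorph (LFmap hd (le_of_lt hkn) a c uF)) :
        (Fin d → ℂ) → (Fin d → ℂ)) = LFmap hd (le_of_lt hkn) a c uF :=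
      hstrict.toOpenPartialHomeomorph_coe
    show (hstrict.toOpenPartialHomeomorph (LFmap hd (le_of_lt hkn) a c uF)) _
        = (hstrict.toOpenPartialHomeomorph (LFmap hd (le_of_lt hkn) a c uF)) θF
    rw [hcoe]
    funext r
    rw [hLF r, hsol r]
  funext i
  induction i using Fin.lastCases with
  | last =>
      rw [hlast0]
      simp
  | cast i =>
      rw [Fin.snoc_castSucc]
      exact congrFun hφeq i
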